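/- arXiv:2605.25716 — 3 statements merged into one kernel-verified Lean document; each statement's English description precedes it below -/
import Mathlib

section
/- Let Q ∈ ℝ^{L_Q×d}, K, V ∈ ℝ^{L_K×d}, let Φ_{KQ}, Φ_V ∈ ℝ^{d×d} be invertible, and let P_Q ∈ ℝ^{L_Q×L_Q}, P_{KV} ∈ ℝ^{L_K×L_K} be permutation matrices. Define Q' = P_Q Q Φ_{KQ}, K' = P_{KV} K Φ_{KQ}^{-T}, V' = P_{KV} V Φ_V. Then Attention(Q', K', V') = P_Q · Attention(Q, K, V) · Φ_V, where Attention(Q,K,V) = softmax(QKᵀ/√d)·V with softmax applied row-wise. -/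
/-!
Permuting rows by `σ` is `Matrix.submatrix σ id`. The change of basis `Φ_KQ` cancels in the
score matrix `Q Kᵀ`; the key/value permutation reindexes the columns of the scores, which the
softmax normalizer sums over, and the rows of `V`, which are contracted against those columns,
so it cancels too; the query permutation only reindexes rows, which softmax treats independently.
-/

open Matrix

noncomputable def softmax {m n : ℕ} (A : Matrix (Fin m) (Fin n) ℝ) :
    Matrix (Fin m) (Fin n) ℝ :=
  fun i j => Real.exp (A i j) / ∑ k, Real.exp (A i k)

noncomputable def attention {lq lk d : ℕ} (Q : Matrix (Fin lq) (Fin d) ℝ)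
    (K V : Matrix (Fin lk) (Fin d) ℝ) : Matrix (Fin lq) (Fin d) ℝ :=
  softmax ((Real.sqrt d)⁻¹ • (Q * Kᵀ)) * V

def permMatrix {m : ℕ} (σ : Equiv.Perm (Fin m)) : Matrix (Fin m) (Fin m) ℝ :=
  fun i j => if σ i = j then 1 else 0

lemma permMatrix_mul_eq_submatrix {m : ℕ} {n : Type*} (σ : Equiv.Perm (Fin m))
    (M : Matrix (Fin m) n ℝ) : permMatrix σ * M = M.submatrix σ id := by
  ext i j
  simp [mul_apply, permMatrix]

lemma softmax_submatrix {m n m' n' : ℕ} (A : Matrix (Fin m) (Fin n) ℝ) (f : Fin m' → Fin m)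
    (e : Fin n' ≃ Fin n) : softmax (A.submatrix f e) = (softmax A).submatrix f e := by
  ext i j
  simp only [softmax, submatrix_apply]
  rw [Equiv.sum_comp e fun k => Real.exp (A (f i) k)]

lemma attention_submatrix {lq lk lq' lk' d : ℕ} (Q : Matrix (Fin lq) (Fin d) ℝ)
    (K V : Matrix (Fin lk) (Fin d) ℝ) (f : Fin lq' → Fin lq) (e : Fin lk' ≃ Fin lk) :
    attention (Q.submatrix f id) (K.submatrix e id) (V.submatrix e id)
      = (attention Q K V).submatrix f id := by
  have hscores : Q.submatrix f id * (K.submatrix e id)ᵀ = (Q * Kᵀ).submatrix f e := by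
    rw [transpose_submatrix, submatrix_mul _ _ _ _ _ Function.bijective_id]
  have hscaled : ((Real.sqrt d)⁻¹ • (Q * Kᵀ)).submatrix f e
      = (Real.sqrt d)⁻¹ • (Q * Kᵀ).submatrix f e := rfl
  rw [attention, attention, hscores, ← hscaled, softmax_submatrix, submatrix_mul_equiv]

lemma attention_mul_mul_inv_transpose {lq lk d : ℕ} (Q : Matrix (Fin lq) (Fin d) ℝ)
    (K V : Matrix (Fin lk) (Fin d) ℝ) (Φ Ψ : Matrix (Fin d) (Fin d) ℝ) (hΦ : IsUnit Φ) :
    attention (Q * Φ) (K * Φ⁻¹ᵀ) (V * Ψ) = attention Q K V * Ψ := by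
  have hdet : IsUnit Φ.det := (isUnit_iff_isUnit_det Φ).mp hΦ
  rw [attention, attention, transpose_mul, transpose_transpose, Matrix.mul_assoc Q,
    mul_nonsing_inv_cancel_left _ _ hdet, Matrix.mul_assoc]

theorem scrambled_attention_protocol_general {lq lk d : ℕ}
    (Q : Matrix (Fin lq) (Fin d) ℝ) (K V : Matrix (Fin lk) (Fin d) ℝ)
    (ΦKQ ΦV : Matrix (Fin d) (Fin d) ℝ) (hKQ : IsUnit ΦKQ)
    (σQ : Equiv.Perm (Fin lq)) (σKV : Equiv.Perm (Fin lk)) :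
    attention (permMatrix σQ * Q * ΦKQ)
      (permMatrix σKV * K * ΦKQ⁻¹ᵀ) (permMatrix σKV * V * ΦV)
      = permMatrix σQ * attention Q K V * ΦV := by
  simp only [attention_mul_mul_inv_transpose _ _ _ _ _ hKQ, permMatrix_mul_eq_submatrix]
  exact congrArg (· * ΦV) (attention_submatrix Q K V σQ σKV)

theorem scrambled_attention_protocol {lq lk d : ℕ}
    (Q : Matrix (Fin lq) (Fin d) ℝ) (K V : Matrix (Fin lk) (Fin d) ℝ)
    (ΦKQ ΦV : Matrix (Fin d) (Fin d) ℝ) (hKQ : IsUnit ΦKQ) (hV : IsUnit ΦV)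
    (σQ : Equiv.Perm (Fin lq)) (σKV : Equiv.Perm (Fin lk)) :
    attention (permMatrix σQ * Q * ΦKQ)
      (permMatrix σKV * K * ΦKQ⁻¹ᵀ) (permMatrix σKV * V * ΦV)
      = permMatrix σQ * attention Q K V * ΦV :=
  scrambled_attention_protocol_general Q K V ΦKQ ΦV hKQ σQ σKV
end

section
/- With notation as in the scrambled attention protocol, the descrambling step recovers the plaintext attention exactly: P_Q^{-1} · Attention(Q', K', V') · Φ_V^{-1} = Attention(Q, K, V). -/
open Matrix

lemma permMatrix_mul_apply {m n : ℕ} (σ : Equiv.Perm (Fin m))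
    (A : Matrix (Fin m) (Fin n) ℝ) (i : Fin m) (j : Fin n) :
    (permMatrix σ * A) i j = A (σ i) j := by
  simp [Matrix.mul_apply, permMatrix, ite_mul]

lemma mul_permMatrixT_apply {m n : ℕ} (σ : Equiv.Perm (Fin n))
    (A : Matrix (Fin m) (Fin n) ℝ) (i : Fin m) (j : Fin n) :
    (A * (permMatrix σ)ᵀ) i j = A i (σ j) := by
  simp [Matrix.mul_apply, permMatrix, Matrix.transpose_apply, mul_ite, eq_comm]

lemma permMatrix_left_inv {m : ℕ} (σ : Equiv.Perm (Fin m)) :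
    permMatrix σ⁻¹ * permMatrix σ = 1 := by
  ext i j
  rw [permMatrix_mul_apply]
  simp [permMatrix, Matrix.one_apply, Equiv.Perm.eq_inv_iff_eq, eq_comm]

lemma permMatrix_inv {m : ℕ} (σ : Equiv.Perm (Fin m)) :
    (permMatrix σ)⁻¹ = permMatrix σ⁻¹ :=
  Matrix.inv_eq_left_inv (permMatrix_left_inv σ)

theorem descrambling_recovers_attention {lq lk d : ℕ}
    (Q : Matrix (Fin lq) (Fin d) ℝ) (K V : Matrix (Fin lk) (Fin d) ℝ)
    (ΦKQ ΦV : Matrix (Fin d) (Fin d) ℝ) (hKQ : IsUnit ΦKQ) (hV : IsUnit ΦV)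
    (σQ : Equiv.Perm (Fin lq)) (σKV : Equiv.Perm (Fin lk)) :
    (permMatrix σQ)⁻¹ *
      attention (permMatrix σQ * Q * ΦKQ)
        (permMatrix σKV * K * ΦKQ⁻¹ᵀ) (permMatrix σKV * V * ΦV) * ΦV⁻¹
      = attention Q K V := by
  have hdet : IsUnit ΦKQ.det := (Matrix.isUnit_iff_isUnit_det ΦKQ).mp hKQ
  have hVdet : IsUnit ΦV.det := (Matrix.isUnit_iff_isUnit_det ΦV).mp hV
  -- Step 1 : the scrambled score matrix
  have hQK : (permMatrix σQ * Q * ΦKQ) * (permMatrix σKV * K * ΦKQ⁻¹ᵀ)ᵀ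
      = permMatrix σQ * (Q * Kᵀ) * (permMatrix σKV)ᵀ := by
    rw [Matrix.transpose_mul, Matrix.transpose_mul, Matrix.transpose_transpose]
    have h1 : ΦKQ * ΦKQ⁻¹ = 1 := Matrix.mul_nonsing_inv _ hdet
    simp only [Matrix.mul_assoc]
    rw [← Matrix.mul_assoc ΦKQ ΦKQ⁻¹, h1, Matrix.one_mul]
  -- Step 2 : softmax equivariance
  have hsm : ∀ i j,
      softmax ((Real.sqrt d)⁻¹ • (permMatrix σQ * (Q * Kᵀ) * (permMatrix σKV)ᵀ)) i j
      = softmax ((Real.sqrt d)⁻¹ • (Q * Kᵀ)) (σQ i) (σKV j) := by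
    intro i j
    have hentry : ∀ (a : Fin lq) (b : Fin lk),
        ((Real.sqrt d)⁻¹ • (permMatrix σQ * (Q * Kᵀ) * (permMatrix σKV)ᵀ)) a b
        = ((Real.sqrt d)⁻¹ • (Q * Kᵀ)) (σQ a) (σKV b) := by
      intro a b
      rw [Matrix.smul_apply, Matrix.smul_apply, Matrix.mul_assoc,
        permMatrix_mul_apply, mul_permMatrixT_apply]
    unfold softmax
    rw [hentry]
    congr 1
    exact Fintype.sum_equiv σKV _ _ (fun k => by rw [hentry])
  -- Step 3 : attention of scrambled inputs
  have hatt : attention (permMatrix σQ * Q * ΦKQ)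
      (permMatrix σKV * K * ΦKQ⁻¹ᵀ) (permMatrix σKV * V * ΦV)
      = permMatrix σQ * (attention Q K V * ΦV) := by
    unfold attention
    rw [hQK, Matrix.mul_assoc (softmax _) V ΦV,
      Matrix.mul_assoc (permMatrix σKV) V ΦV]
    ext i j
    rw [Matrix.mul_apply, permMatrix_mul_apply, Matrix.mul_apply]
    exact Fintype.sum_equiv σKV _ _
      (fun k => by rw [hsm, permMatrix_mul_apply])
  rw [hatt, ← Matrix.mul_assoc, ← Matrix.mul_assoc, permMatrix_inv,
    permMatrix_left_inv, Matrix.one_mul, Matrix.mul_assoc,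
    Matrix.mul_nonsing_inv _ hVdet, Matrix.mul_one]
end

section
/- Composing key/feature scrambling with token permutation preserves the attention result exactly: for invertible Φ ∈ ℝ^{d×d} and permutation matrix P ∈ ℝ^{L×L}, softmax((QΦ)(PKΦ^{-T})ᵀ/√d)(PVΦ_V) = softmax(QKᵀ/√d) V Φ_V. -/
open Matrix

lemma permMatrix_transpose_mul {m : ℕ} (σ : Equiv.Perm (Fin m)) :
    (permMatrix σ)ᵀ * permMatrix σ = 1 := by
  ext i j
  simp only [Matrix.mul_apply, Matrix.transpose_apply, permMatrix, Matrix.one_apply]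
  rw [Finset.sum_eq_single (σ.symm i)]
  · simp [Equiv.apply_symm_apply, eq_comm, ← Equiv.eq_symm_apply]
  · intro b _ hb
    have : σ b ≠ i := fun h => hb (by simp [← h])
    simp [this]
  · simp

lemma mul_permMatrix_transpose_apply {n m : ℕ} (σ : Equiv.Perm (Fin m))
    (M : Matrix (Fin n) (Fin m) ℝ) (i : Fin n) (j : Fin m) :
    (M * (permMatrix σ)ᵀ) i j = M i (σ j) := by
  simp only [Matrix.mul_apply, Matrix.transpose_apply, permMatrix]
  rw [Finset.sum_eq_single (σ j)] <;> simp +contextual [eq_comm]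

lemma softmax_mul_permMatrix_transpose {n m : ℕ} (σ : Equiv.Perm (Fin m))
    (M : Matrix (Fin n) (Fin m) ℝ) :
    softmax (M * (permMatrix σ)ᵀ) = softmax M * (permMatrix σ)ᵀ := by
  ext i j
  rw [mul_permMatrix_transpose_apply]
  simp only [softmax, mul_permMatrix_transpose_apply]
  congr 1
  exact Equiv.sum_comp σ (fun k => Real.exp (M i k))

theorem scrambling_and_permutation_preserve_attention {lq l d : ℕ}
    (Q : Matrix (Fin lq) (Fin d) ℝ) (K V : Matrix (Fin l) (Fin d) ℝ)
    (Φ ΦV : Matrix (Fin d) (Fin d) ℝ) (hΦ : IsUnit Φ) (hΦV : IsUnit ΦV)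
    (σ : Equiv.Perm (Fin l)) :
    softmax ((Real.sqrt d)⁻¹ • ((Q * Φ) * (permMatrix σ * K * Φ⁻¹ᵀ)ᵀ)) *
        (permMatrix σ * V * ΦV)
      = softmax ((Real.sqrt d)⁻¹ • (Q * Kᵀ)) * V * ΦV := by
  have hdet : IsUnit Φ.det := (Matrix.isUnit_iff_isUnit_det Φ).mp hΦ
  have hΦinv : Φ * Φ⁻¹ = 1 := Matrix.mul_nonsing_inv Φ hdet
  have h1 : (Q * Φ) * (permMatrix σ * K * Φ⁻¹ᵀ)ᵀ = (Q * Kᵀ) * (permMatrix σ)ᵀ := by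
    have : Q * Φ * (Φ⁻¹ * (Kᵀ * (permMatrix σ)ᵀ)) = Q * Kᵀ * (permMatrix σ)ᵀ := by
      calc Q * Φ * (Φ⁻¹ * (Kᵀ * (permMatrix σ)ᵀ))
          = Q * (Φ * Φ⁻¹) * (Kᵀ * (permMatrix σ)ᵀ) := by simp only [Matrix.mul_assoc]
        _ = Q * Kᵀ * (permMatrix σ)ᵀ := by rw [hΦinv, Matrix.mul_one, Matrix.mul_assoc]
    simpa [Matrix.transpose_mul, Matrix.mul_assoc] using this
  rw [h1, ← Matrix.smul_mul, softmax_mul_permMatrix_transpose]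
  calc softmax ((Real.sqrt d)⁻¹ • (Q * Kᵀ)) * (permMatrix σ)ᵀ * (permMatrix σ * V * ΦV)
      = softmax ((Real.sqrt d)⁻¹ • (Q * Kᵀ)) * ((permMatrix σ)ᵀ * permMatrix σ) * V * ΦV := by
        simp only [Matrix.mul_assoc]
    _ = softmax ((Real.sqrt d)⁻¹ • (Q * Kᵀ)) * V * ΦV := by
        rw [permMatrix_transpose_mul, Matrix.mul_one]
end
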